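/- arXiv:math/0406162 — 7 statements merged into one kernel-verified Lean document; each statement's English description precedes it below -/
import Mathlib

section
/- Let P and L be finite types with an incidence relation forming a projective plane (every two distinct points lie on a unique common line, every two distinct lines meet in a unique point, and there exists a nondegenerate configuration). Suppose T : P → L is a bijection such that (1) for all x, x is not incident to T x, and (2) for all distinct x₁ x₂, the point of intersection of T x₁ and T x₂ does not lie on the line through x₁ and x₂. Then for every line y, the map sending each point x incident to y to the intersection point of T x with y is a well-defined bijection from {x : P // x is incident to y} to itself. -/
open Configuration

variable {P L : Type*} [Membership P L] [Fintype P] [Fintype L]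
  [Configuration.ProjectivePlane P L]

/-- Condition (2) on `T`: for distinct points `x₁ x₂`, any common point of the
lines `T x₁` and `T x₂` does not lie on any line through `x₁` and `x₂`. -/
def Cond2 (T : P → L) : Prop :=
  ∀ x₁ x₂ : P, x₁ ≠ x₂ → ∀ p : P, p ∈ T x₁ → p ∈ T x₂ →
    ∀ ℓ : L, x₁ ∈ ℓ → x₂ ∈ ℓ → p ∉ ℓ

/-- The set `K` of triples `(a, b, c)` with `a ∈ T c`, `b ∈ T a`, `b ∈ T c`. -/
def Kset (T : P → L) : Set (P × P × P) :=
  {t | t.1 ∈ T t.2.2 ∧ t.2.1 ∈ T t.1 ∧ t.2.1 ∈ T t.2.2}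

section MeetOnLine

variable {T : P → L}

omit [Fintype P] [Fintype L] [ProjectivePlane P L] in
theorem image_ne_of_mem (h1 : ∀ x : P, x ∉ T x) {x : P} {y : L} (hx : x ∈ y) : T x ≠ y :=
  fun h => h1 x (h ▸ hx)

/-- The map `T*` of the paper. -/
noncomputable def meetOnLine (h1 : ∀ x : P, x ∉ T x) (y : L) :
    {x : P // x ∈ y} → {x : P // x ∈ y} :=
  fun x => ⟨HasPoints.mkPoint (image_ne_of_mem h1 x.2),
    (HasPoints.mkPoint_ax (image_ne_of_mem h1 x.2)).2⟩

omit [Fintype P] [Fintype L] in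
theorem meetOnLine_mem (h1 : ∀ x : P, x ∉ T x) (y : L) (x : {x : P // x ∈ y}) :
    (meetOnLine h1 y x : P) ∈ T x :=
  (HasPoints.mkPoint_ax (image_ne_of_mem h1 x.2)).1

omit [Fintype P] [Fintype L] in
/-- Two points of `y` with a common image `p` would put `p = T x₁ ∩ T x₂` on the line
`y = x₁ x₂`. -/
theorem meetOnLine_injective (h1 : ∀ x : P, x ∉ T x) (y : L) (h2 : Cond2 T) :
    Function.Injective (meetOnLine h1 y) := by
  intro x₁ x₂ h_eq
  by_contra h_ne
  have hp₂ : (meetOnLine h1 y x₁ : P) ∈ T x₂ := h_eq ▸ meetOnLine_mem h1 y x₂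
  exact h2 x₁ x₂ (Subtype.coe_ne_coe.mpr h_ne) _ (meetOnLine_mem h1 y x₁) hp₂
    y x₁.2 x₂.2 (meetOnLine h1 y x₁).2

omit [Fintype L] in
theorem meetOnLine_bijective (h1 : ∀ x : P, x ∉ T x) (y : L) (h2 : Cond2 T) :
    Function.Bijective (meetOnLine h1 y) :=
  Finite.injective_iff_bijective.mp (meetOnLine_injective h1 y h2)

end MeetOnLine

theorem stmt0_general (T : P → L)
    (h1 : ∀ x : P, x ∉ T x) (h2 : Cond2 T) (y : L) :
    ∃ f : {x : P // x ∈ y} → {x : P // x ∈ y},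
      Function.Bijective f ∧ ∀ x : {x : P // x ∈ y}, (f x : P) ∈ T (x : P) :=
  ⟨meetOnLine h1 y, meetOnLine_bijective h1 y h2, meetOnLine_mem h1 y⟩

/-- For every line `y`, the map sending a point `x` of `y` to the intersection
point of `T x` with `y` is a well-defined bijection of the points of `y`. -/
theorem stmt0 (T : P → L) (hT : Function.Bijective T)
    (h1 : ∀ x : P, x ∉ T x) (h2 : Cond2 T) (y : L) :
    ∃ f : {x : P // x ∈ y} → {x : P // x ∈ y},
      Function.Bijective f ∧ ∀ x : {x : P // x ∈ y}, (f x : P) ∈ T (x : P) :=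
  stmt0_general T h1 h2 y
end

section
/- With P, L, T, K as above, for every pair (xᵢ, xⱼ) with xⱼ incident to T xᵢ, there exists a unique x_k such that (xᵢ, xⱼ, x_k) ∈ K. -/
open Configuration

variable {P L : Type*} [Membership P L] [Fintype P] [Fintype L]
  [Configuration.ProjectivePlane P L]

/- The points `c` in question are the preimages under `T` of the line through `a` and `b`. -/
theorem stmt2_general (T : P → L) (hT : Function.Bijective T)
    (h1 : ∀ x : P, x ∉ T x) :
    ∀ a b : P, b ∈ T a → ∃! c : P, (a, b, c) ∈ Kset T := by
  intro a b hb
  have hab : a ≠ b := by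
    rintro rfl
    exact h1 a hb
  simpa only [Kset, Set.mem_ofPred_eq, hb, true_and] using
    hT.existsUnique_iff.mp (HasLines.existsUnique_line P L a b hab)

/-- Every pair `(a, b)` with `b ∈ T a` extends to a unique triple `(a, b, c) ∈ K`. -/
theorem stmt2 (T : P → L) (hT : Function.Bijective T)
    (h1 : ∀ x : P, x ∉ T x) (h2 : Cond2 T) :
    ∀ a b : P, b ∈ T a → ∃! c : P, (a, b, c) ∈ Kset T :=
  stmt2_general T hT h1
end

section
/- With P, L, T, K as above, for every pair (xⱼ, x_k) with xⱼ incident to T x_k, there exists a unique xᵢ such that (xᵢ, xⱼ, x_k) ∈ K. -/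
/-!
Uniqueness is condition (2) applied to the line `T c`. For existence, the same condition makes
`x ↦ T x ∩ T c` injective on the points of `T c` (the intersection is a point because `x ∉ T x`
gives `T x ≠ T c`), hence surjective since `P` is finite, so `b` is hit by some `a`.
-/

open Configuration

variable {P L : Type*} [Membership P L] [Fintype P] [Fintype L]
  [Configuration.ProjectivePlane P L]

omit [Fintype P] [Fintype L] [ProjectivePlane P L] in
theorem Cond2.eq_of_mem_of_mem {T : P → L} (h2 : Cond2 T) {a a' b : P} {ℓ : L}
    (ha : a ∈ ℓ) (ha' : a' ∈ ℓ) (hb : b ∈ ℓ) (hba : b ∈ T a) (hba' : b ∈ T a') :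
    a = a' := by
  by_contra hne
  exact h2 a a' hne b hba hba' ℓ ha ha' hb

section LineMeet

omit [Fintype P] [Fintype L]

variable (T : P → L) {ℓ : L} (hT : ∀ x ∈ ℓ, T x ≠ ℓ)

/-- The map `T*` of the paper (there `ℓ = T x_k`). -/
noncomputable def lineMeet : {x // x ∈ ℓ} → {x // x ∈ ℓ} :=
  fun x => ⟨HasPoints.mkPoint (hT x x.2), (HasPoints.mkPoint_ax (hT x x.2)).2⟩

theorem lineMeet_mem (x : {x // x ∈ ℓ}) : (lineMeet T hT x : P) ∈ T x :=
  (HasPoints.mkPoint_ax (hT x x.2)).1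

variable {T}

theorem Cond2.lineMeet_injective (h2 : Cond2 T) : Function.Injective (lineMeet T hT) :=
  fun x y hxy => Subtype.ext <| h2.eq_of_mem_of_mem x.2 y.2 (lineMeet T hT x).2
    (lineMeet_mem T hT x) (hxy ▸ lineMeet_mem T hT y)

theorem Cond2.lineMeet_surjective [Finite P] (h2 : Cond2 T) :
    Function.Surjective (lineMeet T hT) :=
  Finite.surjective_of_injective (h2.lineMeet_injective hT)

end LineMeet

theorem stmt3_general (T : P → L)
    (h1 : ∀ x : P, x ∉ T x) (h2 : Cond2 T) :
    ∀ b c : P, b ∈ T c → ∃! a : P, (a, b, c) ∈ Kset T := by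
  intro b c hbc
  have hT : ∀ x ∈ T c, T x ≠ T c := fun x hx h => h1 x (h ▸ hx)
  obtain ⟨a, ha⟩ := h2.lineMeet_surjective hT ⟨b, hbc⟩
  have hba : b ∈ T a := by simpa [ha] using lineMeet_mem T hT a
  refine ⟨a, ⟨a.2, hba, hbc⟩, fun a' ⟨ha'c, hba', _⟩ => ?_⟩
  exact h2.eq_of_mem_of_mem ha'c a.2 hbc hba' hba

/-- Every pair `(b, c)` with `b ∈ T c` extends to a unique triple `(a, b, c) ∈ K`. -/
theorem stmt3 (T : P → L) (hT : Function.Bijective T)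
    (h1 : ∀ x : P, x ∉ T x) (h2 : Cond2 T) :
    ∀ b c : P, b ∈ T c → ∃! a : P, (a, b, c) ∈ Kset T :=
  stmt3_general T h1 h2
end

section
/- If (a,b,c) ∈ K and (a,b',c) ∈ K then b = b'; if (a,b,c) ∈ K and (a,b,c') ∈ K then c = c'; if (a,b,c) ∈ K and (a',b,c) ∈ K then a = a'. (Each pair of coordinates determines the triple uniquely.) -/
open Configuration

variable {P L : Type*} [Membership P L] [Fintype P] [Fintype L]
  [Configuration.ProjectivePlane P L]

omit [Fintype P] [Fintype L] [ProjectivePlane P L] in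
theorem ne_of_mem_of_forall_notMem_self {T : P → L} (h1 : ∀ x : P, x ∉ T x) {x y : P}
    (hy : y ∈ T x) : x ≠ y := by
  rintro rfl
  exact h1 x hy

section Kset

omit [Fintype P] [Fintype L]

variable {T : P → L} {a a' b b' c c' : P}

/-- The lines `T a` and `T c` are distinct because `a ∈ T c` but `a ∉ T a`, so they meet only
in `b`. -/
theorem Kset.snd_unique (hT : Function.Injective T) (h1 : ∀ x : P, x ∉ T x)
    (h : (a, b, c) ∈ Kset T) (h' : (a, b', c) ∈ Kset T) : b = b' := by
  obtain ⟨hac, hba, hbc⟩ := h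
  obtain ⟨-, hb'a, hb'c⟩ := h'
  have hTac : T a ≠ T c := hT.ne (ne_of_mem_of_forall_notMem_self h1 hac).symm
  exact (Nondegenerate.eq_or_eq hba hb'a hbc hb'c).resolve_right hTac

/-- The points `a ≠ b` (as `b ∈ T a`) lie on both `T c` and `T c'`, hence these lines coincide. -/
theorem Kset.thd_unique (hT : Function.Injective T) (h1 : ∀ x : P, x ∉ T x)
    (h : (a, b, c) ∈ Kset T) (h' : (a, b, c') ∈ Kset T) : c = c' := by
  obtain ⟨hac, hba, hbc⟩ := h
  obtain ⟨hac', -, hbc'⟩ := h'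
  have hab : a ≠ b := ne_of_mem_of_forall_notMem_self h1 hba
  exact hT ((Nondegenerate.eq_or_eq hac hbc hac' hbc').resolve_left hab)

omit [ProjectivePlane P L] in
/-- Otherwise `b ∈ T a ∩ T a'` would lie on the line `T c` through `a` and `a'`. -/
theorem Kset.fst_unique (h2 : Cond2 T) (h : (a, b, c) ∈ Kset T) (h' : (a', b, c) ∈ Kset T) :
    a = a' := by
  obtain ⟨hac, hba, hbc⟩ := h
  obtain ⟨ha'c, hba', -⟩ := h'
  by_contra hne
  exact h2 a a' hne b hba hba' (T c) hac ha'c hbc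

end Kset

/-- Each pair of coordinates of a triple in `K` determines the third uniquely. -/
theorem stmt4 (T : P → L) (hT : Function.Bijective T)
    (h1 : ∀ x : P, x ∉ T x) (h2 : Cond2 T) :
    (∀ a b b' c : P, (a, b, c) ∈ Kset T → (a, b', c) ∈ Kset T → b = b') ∧
    (∀ a b c c' : P, (a, b, c) ∈ Kset T → (a, b, c') ∈ Kset T → c = c') ∧
    (∀ a a' b c : P, (a, b, c) ∈ Kset T → (a', b, c) ∈ Kset T → a = a') :=
  ⟨fun _ _ _ _ => Kset.snd_unique hT.1 h1, fun _ _ _ _ => Kset.thd_unique hT.1 h1,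
    fun _ _ _ _ => Kset.fst_unique h2⟩
end

section
/- With P, L, T, K as above, the projection maps π₁₂(a,b,c) = (a,b), π₂₃(a,b,c) = (b,c), π₁₃(a,b,c) = (a,c) are injective on K, and their images are exactly {(x,y) : y ∈ T x}, {(y,z) : y ∈ T z}, {(x,z) : x ∈ T z} respectively. -/
open Configuration

variable {P L : Type*} [Membership P L] [Fintype P] [Fintype L]
  [Configuration.ProjectivePlane P L]

/-- The three coordinate-pair projections are injective on `K`, with images
exactly the admissible pairs. -/
theorem stmt8 (T : P → L) (hT : Function.Bijective T)
    (h1 : ∀ x : P, x ∉ T x) (h2 : Cond2 T) :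
    Set.InjOn (fun t : P × P × P => (t.1, t.2.1)) (Kset T) ∧
    Set.InjOn (fun t : P × P × P => (t.2.1, t.2.2)) (Kset T) ∧
    Set.InjOn (fun t : P × P × P => (t.1, t.2.2)) (Kset T) ∧
    (fun t : P × P × P => (t.1, t.2.1)) '' Kset T = {xy : P × P | xy.2 ∈ T xy.1} ∧
    (fun t : P × P × P => (t.2.1, t.2.2)) '' Kset T = {yz : P × P | yz.1 ∈ T yz.2} ∧
    (fun t : P × P × P => (t.1, t.2.2)) '' Kset T = {xz : P × P | xz.1 ∈ T xz.2} := by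
  have hinj12 : Set.InjOn (fun t : P × P × P => (t.1, t.2.1)) (Kset T) := by
    rintro ⟨a, b, c⟩ ⟨hac, hba, hbc⟩ ⟨a', b', c'⟩ ⟨hac', hba', hbc'⟩ heq
    simp only [Prod.mk.injEq] at heq
    obtain ⟨rfl, rfl⟩ := heq
    have hab : a ≠ b := fun h => h1 a (h ▸ hba)
    rcases Configuration.Nondegenerate.eq_or_eq (l₁ := T c) (l₂ := T c')
        hac hbc hac' hbc' with h | h
    · exact absurd h hab
    · simp [hT.injective h]
  have hinj23 : Set.InjOn (fun t : P × P × P => (t.2.1, t.2.2)) (Kset T) := by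
    rintro ⟨a, b, c⟩ ⟨hac, hba, hbc⟩ ⟨a', b', c'⟩ ⟨hac', hba', hbc'⟩ heq
    simp only [Prod.mk.injEq] at heq
    obtain ⟨rfl, rfl⟩ := heq
    by_cases haa : a = a'
    · simp [haa]
    · exact absurd hbc (h2 a a' haa b hba hba' (T c) hac hac')
  have hinj13 : Set.InjOn (fun t : P × P × P => (t.1, t.2.2)) (Kset T) := by
    rintro ⟨a, b, c⟩ ⟨hac, hba, hbc⟩ ⟨a', b', c'⟩ ⟨hac', hba', hbc'⟩ heq
    simp only [Prod.mk.injEq] at heq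
    obtain ⟨rfl, rfl⟩ := heq
    have hacne : a ≠ c := fun h => h1 a (by rw [← h] at hac; exact hac)
    rcases Configuration.Nondegenerate.eq_or_eq (l₁ := T a) (l₂ := T c)
        hba hba' hbc hbc' with h | h
    · rw [show b = b' from h]
    · exact absurd (hT.injective h) hacne
  have him12 : (fun t : P × P × P => (t.1, t.2.1)) '' Kset T
      = {xy : P × P | xy.2 ∈ T xy.1} := by
    ext ⟨x, y⟩
    constructor
    · rintro ⟨⟨a, b, c⟩, ⟨hac, hba, hbc⟩, heq⟩
      simp only [Prod.mk.injEq] at heq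
      obtain ⟨rfl, rfl⟩ := heq
      exact hba
    · intro hy
      have hxy : x ≠ y := fun h => h1 x (h ▸ hy)
      obtain ⟨c, hc⟩ := hT.surjective (Configuration.HasLines.mkLine hxy)
      refine ⟨(x, y, c), ⟨?_, hy, ?_⟩, rfl⟩
      · rw [hc]; exact (Configuration.HasLines.mkLine_ax hxy).1
      · rw [hc]; exact (Configuration.HasLines.mkLine_ax hxy).2
  have him13 : (fun t : P × P × P => (t.1, t.2.2)) '' Kset T
      = {xz : P × P | xz.1 ∈ T xz.2} := by
    ext ⟨x, z⟩
    constructor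
    · rintro ⟨⟨a, b, c⟩, ⟨hac, hba, hbc⟩, heq⟩
      simp only [Prod.mk.injEq] at heq
      obtain ⟨rfl, rfl⟩ := heq
      exact hac
    · intro hx
      have hxz : x ≠ z := fun h => h1 x (by rw [← h] at hx; exact hx)
      have hl : T x ≠ T z := fun h => hxz (hT.injective h)
      refine ⟨(x, Configuration.HasPoints.mkPoint hl, z),
        ⟨hx, (Configuration.HasPoints.mkPoint_ax hl).1,
          (Configuration.HasPoints.mkPoint_ax hl).2⟩, rfl⟩
  have him23 : (fun t : P × P × P => (t.2.1, t.2.2)) '' Kset T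
      = {yz : P × P | yz.1 ∈ T yz.2} := by
    have hsub : (fun t : P × P × P => (t.2.1, t.2.2)) '' Kset T
        ⊆ {yz : P × P | yz.1 ∈ T yz.2} := by
      rintro ⟨y, z⟩ ⟨⟨a, b, c⟩, ⟨hac, hba, hbc⟩, heq⟩
      simp only [Prod.mk.injEq] at heq
      obtain ⟨rfl, rfl⟩ := heq
      exact hbc
    have hswap : {xy : P × P | xy.2 ∈ T xy.1}
        = Prod.swap '' {yz : P × P | yz.1 ∈ T yz.2} := by
      ext ⟨x, y⟩
      constructor
      · intro h; exact ⟨(y, x), h, rfl⟩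
      · rintro ⟨⟨a, b⟩, h, heq⟩
        cases heq
        exact h
    have hcard : ({yz : P × P | yz.1 ∈ T yz.2}).ncard
        ≤ ((fun t : P × P × P => (t.2.1, t.2.2)) '' Kset T).ncard := by
      rw [Set.ncard_image_of_injOn hinj23]
      have h1' : (Kset T).ncard = ({xy : P × P | xy.2 ∈ T xy.1}).ncard := by
        rw [← him12, Set.ncard_image_of_injOn hinj12]
      rw [h1', hswap, Set.ncard_image_of_injective _ Prod.swap_injective]
    exact Set.eq_of_subset_of_ncard_le hsub hcard (Set.toFinite _)
  exact ⟨hinj12, hinj23, hinj13, him12, him23, him13⟩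
end

section
/- Let K ⊆ P³ be the set of triples of a polygonal presentation as above, over a projective plane of order q. Then for each fixed x₂ ∈ P, the number of triples in K with first coordinate x₂ is exactly q+1, i.e. |{(b,c) : (x₂,b,c) ∈ K}| = q+1; equivalently, it equals the number of points b incident to T x₂, each such b extending uniquely to a triple (x₂,b,c) ∈ K. -/
open Configuration

variable {P L : Type*} [Membership P L] [Fintype P] [Fintype L]
  [Configuration.ProjectivePlane P L]

/-- For each point `a`, there are exactly `q + 1` triples in `K` with first
coordinate `a`. -/
theorem stmt11 (T : P → L) (hT : Function.Bijective T)
    (h1 : ∀ x : P, x ∉ T x) (h2 : Cond2 T) (q : ℕ)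
    (hq : ∀ l : L, pointCount P l = q + 1) (a : P) :
    Nat.card {bc : P × P // (a, bc.1, bc.2) ∈ Kset T} = q + 1 := by
  have key : ∀ b : P, b ∈ T a → ∃! c : P, a ∈ T c ∧ b ∈ T c := by
    intro b hb
    have hab : a ≠ b := fun h => h1 a (h ▸ hb)
    obtain ⟨c, hc⟩ := hT.surjective (HasLines.mkLine hab)
    refine ⟨c, ⟨hc ▸ (HasLines.mkLine_ax hab).1, hc ▸ (HasLines.mkLine_ax hab).2⟩, ?_⟩
    intro c' hc'
    apply hT.injective
    rw [hc]
    exact ((Nondegenerate.eq_or_eq hc'.1 hc'.2 (HasLines.mkLine_ax hab).1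
      (HasLines.mkLine_ax hab).2).resolve_left hab)
  have e : {bc : P × P // (a, bc.1, bc.2) ∈ Kset T} ≃ {b : P // b ∈ T a} :=
    { toFun := fun x => ⟨x.1.1, x.2.2.1⟩
      invFun := fun b => ⟨(b.1, (key b.1 b.2).choose),
        ⟨(key b.1 b.2).choose_spec.1.1, b.2, (key b.1 b.2).choose_spec.1.2⟩⟩
      left_inv := by
        rintro ⟨⟨b, c⟩, h⟩
        have hb : b ∈ T a := h.2.1
        have := (key b hb).choose_spec.2 c ⟨h.1, h.2.2⟩
        simp [this]
      right_inv := fun b => rfl }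
  rw [Nat.card_congr e]
  exact hq (T a)
end

section
/- With notation as above, for each c ∈ P, the number of pairs (a,b) with (a,b,c) ∈ K equals q+1, and for each b ∈ P, the number of pairs (a,c) with (a,b,c) ∈ K equals q+1. -/
/-!
In a triple `(a, b, c)` of `K`, any two coordinates determine the third. Given `a` and `c`, the
point `b` is the intersection of the lines `T a` and `T c`, which differ because `a ∈ T c` but
`a ∉ T a`. Given `a` and `b`, which differ because `b ∈ T a` but `b ∉ T b`, the line `T c` is the
line through `a` and `b`, and `T` is a bijection. Hence the triples over a fixed `c` are counted
by the points of `T c`, and those over a fixed `b` by the lines through `b`; both numbers are `q + 1`.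
-/

open Configuration

variable {P L : Type*} [Membership P L] [Fintype P] [Fintype L]
  [Configuration.ProjectivePlane P L]

theorem Nat.card_subtype_prod_eq_of_existsUnique {α β : Type*} {p : α → Prop}
    {r : α → β → Prop} (h : ∀ a, p a → ∃! b, r a b) :
    Nat.card {ab : α × β // p ab.1 ∧ r ab.1 ab.2} = Nat.card {a // p a} :=
  Nat.card_congr
    { toFun := fun x => ⟨x.1.1, x.2.1⟩
      invFun := fun a => ⟨(a, (h a a.2).exists.choose), a.2, (h a a.2).exists.choose_spec⟩
      left_inv := fun ⟨⟨a, _⟩, ha, hb⟩ =>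
        Subtype.ext <| Prod.ext rfl <| (h a ha).unique (h a ha).exists.choose_spec hb
      right_inv := fun _ => rfl }

namespace Configuration

section Kset

variable {P L : Type*} [Membership P L] (T : P → L)

theorem card_Kset_fiber_third [HasPoints P L] (h1 : ∀ x : P, x ∉ T x) (c : P) :
    Nat.card {ab : P × P // (ab.1, ab.2, c) ∈ Kset T} = pointCount P (T c) :=
  Nat.card_subtype_prod_eq_of_existsUnique fun a ha =>
    HasPoints.existsUnique_point P L (T a) (T c) fun hac => h1 a (hac ▸ ha)

theorem card_Kset_fiber_second [HasLines P L] (hT : Function.Bijective T)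
    (h1 : ∀ x : P, x ∉ T x) (b : P) :
    Nat.card {ac : P × P // (ac.1, b, ac.2) ∈ Kset T} = lineCount L b := by
  have hfiber : ∀ a, b ∈ T a → ∃! c, a ∈ T c ∧ b ∈ T c := fun a hba =>
    hT.existsUnique_iff.mp <|
      HasLines.existsUnique_line P L a b fun hab => h1 a (hab ▸ hba)
  calc Nat.card {ac : P × P // (ac.1, b, ac.2) ∈ Kset T}
      = Nat.card {ac : P × P // b ∈ T ac.1 ∧ ac.1 ∈ T ac.2 ∧ b ∈ T ac.2} :=
        Nat.card_congr <| Equiv.subtypeEquivRight fun _ => and_left_comm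
    _ = Nat.card {a : P // b ∈ T a} := Nat.card_subtype_prod_eq_of_existsUnique hfiber
    _ = lineCount L b :=
        Nat.card_congr <| (Equiv.ofBijective T hT).subtypeEquiv fun _ => Iff.rfl

end Kset

end Configuration

theorem stmt12_general (T : P → L) (hT : Function.Bijective T)
    (h1 : ∀ x : P, x ∉ T x) (q : ℕ)
    (hq : ∀ l : L, pointCount P l = q + 1) :
    (∀ c : P, Nat.card {ab : P × P // (ab.1, ab.2, c) ∈ Kset T} = q + 1) ∧
    (∀ b : P, Nat.card {ac : P × P // (ac.1, b, ac.2) ∈ Kset T} = q + 1) :=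
  ⟨fun c => (card_Kset_fiber_third T h1 c).trans (hq (T c)),
    fun b => (card_Kset_fiber_second T hT h1 b).trans
      ((ProjectivePlane.lineCount_eq_pointCount b (T b)).trans (hq (T b)))⟩

/-- For each point `c` (resp. `b`) there are exactly `q + 1` triples in `K`
with third (resp. second) coordinate `c` (resp. `b`). -/
theorem stmt12 (T : P → L) (hT : Function.Bijective T)
    (h1 : ∀ x : P, x ∉ T x) (h2 : Cond2 T) (q : ℕ)
    (hq : ∀ l : L, pointCount P l = q + 1) :
    (∀ c : P, Nat.card {ab : P × P // (ab.1, ab.2, c) ∈ Kset T} = q + 1) ∧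
    (∀ b : P, Nat.card {ac : P × P // (ac.1, b, ac.2) ∈ Kset T} = q + 1) :=
  stmt12_general T hT h1 q hq
end
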